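/- The shape regularity of the Kuhn simplex T̂ ⊂ ℝ^n equals γ(T̂) = √n · (1 + (n−1)/√2), where γ(S) = R(S)/r(S). -/

import Mathlib

open Metric Set

/-- Diameter of the largest closed ball inscribed in `S`. -/
noncomputable def inDiam {n : ℕ} (S : Set (EuclideanSpace ℝ (Fin n))) : ℝ :=
  2 * sSup {r : ℝ | 0 ≤ r ∧ ∃ c, Metric.closedBall c r ⊆ S}

/-- Diameter of the smallest closed ball containing `S`. -/
noncomputable def circumDiam {n : ℕ} (S : Set (EuclideanSpace ℝ (Fin n))) : ℝ :=
  2 * sInf {r : ℝ | 0 ≤ r ∧ ∃ c, S ⊆ Metric.closedBall c r}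

/-- Shape regularity `γ(S) = R(S)/r(S)`. -/
noncomputable def shapeReg {n : ℕ} (S : Set (EuclideanSpace ℝ (Fin n))) : ℝ :=
  circumDiam S / inDiam S

/-- Height of the simplex with vertices `v` over the hyperface opposite vertex `i`. -/
noncomputable def simplexHeight {n : ℕ} (v : Fin (n + 1) → EuclideanSpace ℝ (Fin n))
    (i : Fin (n + 1)) : ℝ :=
  sSup ((fun x => Metric.infDist x (convexHull ℝ (v '' {i}ᶜ))) ''
    convexHull ℝ (Set.range v))

/-- Minimal height of the simplex with vertices `v`. -/
noncomputable def minHeight {n : ℕ} (v : Fin (n + 1) → EuclideanSpace ℝ (Fin n)) : ℝ :=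
  ⨅ i, simplexHeight v i

/-- The `k`-th vertex of the Kuhn simplex, `v_k = e_1 + ⋯ + e_k`. -/
noncomputable def kuhnVertex (n : ℕ) (k : Fin (n + 1)) : EuclideanSpace ℝ (Fin n) :=
  (WithLp.equiv 2 (Fin n → ℝ)).symm fun i => if (i : ℕ) < (k : ℕ) then 1 else 0

/-- The Kuhn simplex `conv{0, e₁, e₁+e₂, …, e₁+⋯+e_n} ⊂ ℝⁿ`. -/
noncomputable def kuhnSimplex (n : ℕ) : Set (EuclideanSpace ℝ (Fin n)) :=
  convexHull ℝ (Set.range (kuhnVertex n))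

/-!
In coordinates the Kuhn simplex is `{x | 1 ≥ x₀ ≥ x₁ ≥ ⋯ ≥ x_{n-1} ≥ 0}`: the barycentric weights of
such an `x` are the successive decrements of `1, x₀, …, x_{n-1}, 0`. Every vertex lies at distance
`√n / 2` from `(1/2, …, 1/2)`, while `0` and `e₁ + ⋯ + eₙ` are `√n` apart, so `R(T̂) = √n`.
A closed ball `B(c, r)` lies in the half-space `⟪a, x⟫ ≤ b` iff `⟪a, c⟫ + r ‖a‖ ≤ b`. The facet
normals of `T̂` have norms `1, √2, …, √2, 1`, so a ball in `T̂` satisfies `c₀ ≤ 1 - r`,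
`c_{i+1} ≤ c_i - √2 r` and `r ≤ c_{n-1}`; chaining these gives `r (2 + (n - 1) √2) ≤ 1`, with
equality for `c_i = r (1 + (n - 1 - i) √2)`.
-/

open scoped RealInnerProductSpace

theorem closedBall_subset_setOf_inner_le_iff {E : Type*} [NormedAddCommGroup E]
    [InnerProductSpace ℝ E] {c a : E} {r b : ℝ} (hr : 0 ≤ r) :
    closedBall c r ⊆ {x | ⟪a, x⟫ ≤ b} ↔ ⟪a, c⟫ + r * ‖a‖ ≤ b := by
  constructor
  · intro h
    rcases eq_or_ne a 0 with rfl | ha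
    · simpa using h (mem_closedBall_self hr)
    have ha' : 0 < ‖a‖ := norm_pos_iff.mpr ha
    have hmem : c + (r / ‖a‖) • a ∈ closedBall c r := by
      rw [mem_closedBall, dist_self_add_left, norm_smul, Real.norm_of_nonneg (by positivity),
        div_mul_cancel₀ _ ha'.ne']
    have := h hmem
    simp only [mem_ofPred_eq, inner_add_right, real_inner_smul_right,
      real_inner_self_eq_norm_sq] at this
    convert this using 2
    field_simp
  · intro h x hx
    calc ⟪a, x⟫ = ⟪a, c⟫ + ⟪a, x - c⟫ := by rw [inner_sub_right]; ring
      _ ≤ ⟪a, c⟫ + ‖a‖ * ‖x - c‖ := by gcongr; exact real_inner_le_norm a _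
      _ ≤ ⟪a, c⟫ + r * ‖a‖ := by
        rw [mul_comm r]; gcongr; rwa [← dist_eq_norm]
      _ ≤ b := h

theorem EuclideanSpace.dist_eq_sqrt_card_mul {ι : Type*} [Fintype ι]
    {x y : EuclideanSpace ℝ ι} {d : ℝ} (hd : 0 ≤ d) (h : ∀ i, dist (x i) (y i) = d) :
    dist x y = √(Fintype.card ι) * d := by
  simp [EuclideanSpace.dist_eq, h, Real.sqrt_mul (Nat.cast_nonneg _), Real.sqrt_sq hd]

theorem EuclideanSpace.norm_single_sub_single {ι : Type*} [Fintype ι] [DecidableEq ι]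
    {i j : ι} (hij : i ≠ j) :
    ‖EuclideanSpace.single i (1 : ℝ) - EuclideanSpace.single j 1‖ = √2 := by
  rw [← Real.sqrt_sq (norm_nonneg _), @norm_sub_sq_real]
  simp [EuclideanSpace.inner_single_left, hij.symm]
  norm_num

theorem Finset.sum_range_ite_lt_sub (f : ℕ → ℝ) {i n : ℕ} (hi : i < n) :
    ∑ k ∈ range n, (if i < k then f k - f (k + 1) else 0) = f (i + 1) - f n := by
  rw [← sum_range_add_sum_Ico _ hi, sum_eq_zero fun k hk => if_neg (by simp at hk; omega),
    zero_add, sum_congr rfl fun k hk => if_pos (by simp at hk; omega)]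
  simpa only [Pi.neg_apply, neg_sub_neg] using sum_Ico_sub (-f) hi

theorem kuhnVertex_apply (n : ℕ) (k : Fin (n + 1)) (i : Fin n) :
    kuhnVertex n k i = if (i : ℕ) < k then 1 else 0 := rfl

/-- The barycentric weight of `x` at the vertex `kuhnVertex n k` is
`kuhnProfile x k - kuhnProfile x (k + 1)`. -/
def kuhnProfile {n : ℕ} (x : EuclideanSpace ℝ (Fin n)) : ℕ → ℝ
  | 0 => 1
  | j + 1 => if h : j < n then x ⟨j, h⟩ else 0

theorem kuhnProfile_succ_le {m : ℕ} {x : EuclideanSpace ℝ (Fin (m + 1))}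
    (h0 : x 0 ≤ 1) (hsucc : ∀ i : Fin m, x i.succ ≤ x i.castSucc) (hlast : 0 ≤ x (Fin.last m)) :
    ∀ j, kuhnProfile x (j + 1) ≤ kuhnProfile x j
  | 0 => by simpa [kuhnProfile] using h0
  | j + 1 => by
    by_cases hj : j + 1 < m + 1
    · simp only [kuhnProfile, dif_pos hj, dif_pos (Nat.lt_of_succ_lt hj)]
      exact hsucc ⟨j, by omega⟩
    by_cases hj' : j < m + 1
    · obtain rfl : j = m := by omega
      simpa [kuhnProfile, Fin.last] using hlast
    · simp [kuhnProfile, hj, hj']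

theorem mem_kuhnSimplex_succ_iff {m : ℕ} {x : EuclideanSpace ℝ (Fin (m + 1))} :
    x ∈ kuhnSimplex (m + 1) ↔
      x 0 ≤ 1 ∧ (∀ i : Fin m, x i.succ ≤ x i.castSucc) ∧ 0 ≤ x (Fin.last m) := by
  constructor
  · intro hx
    refine (convexHull_min (t := {y | y 0 ≤ 1 ∧ (∀ i : Fin m, y i.succ ≤ y i.castSucc) ∧
      0 ≤ y (Fin.last m)}) ?_ ?_ : kuhnSimplex (m + 1) ⊆ _) hx
    · rintro _ ⟨k, rfl⟩
      refine ⟨?_, fun i => ?_, ?_⟩ <;> simp only [kuhnVertex_apply] <;> split_ifs <;> simp_all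
      omega
    · intro x hx y hy a b ha hb hab
      obtain ⟨hx0, hxs, hxl⟩ := hx
      obtain ⟨hy0, hys, hyl⟩ := hy
      simp only [mem_ofPred_eq, PiLp.add_apply, PiLp.smul_apply, smul_eq_mul]
      refine ⟨by nlinarith, fun i => ?_, by positivity⟩
      nlinarith [hxs i, hys i]
  · rintro ⟨h0, hsucc, hlast⟩
    set g := kuhnProfile x
    have hsum : ∑ k : Fin (m + 2), (g k - g (k + 1)) = 1 := by
      rw [Fin.sum_univ_eq_sum_range (fun k => g k - g (k + 1)), Finset.sum_range_sub']
      simp [g, kuhnProfile]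
    have hcomb : ∑ k : Fin (m + 2), (g k - g (k + 1)) • kuhnVertex (m + 1) k = x := by
      ext i
      simp only [WithLp.ofLp_sum, WithLp.ofLp_smul, Finset.sum_apply, Pi.smul_apply, smul_eq_mul,
        kuhnVertex_apply, mul_ite, mul_one, mul_zero]
      rw [Fin.sum_univ_eq_sum_range (fun k => if (i : ℕ) < k then g k - g (k + 1) else 0),
        Finset.sum_range_ite_lt_sub _ (by omega)]
      simp [g, kuhnProfile, i.isLt]
    rw [← hcomb]
    exact (convex_convexHull ℝ _).sum_mem
      (fun k _ => sub_nonneg.2 (kuhnProfile_succ_le h0 hsucc hlast k)) hsum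
      (fun k _ => subset_convexHull ℝ _ (mem_range_self k))

theorem closedBall_subset_kuhnSimplex_succ_iff {m : ℕ} {c : EuclideanSpace ℝ (Fin (m + 1))}
    {r : ℝ} (hr : 0 ≤ r) :
    closedBall c r ⊆ kuhnSimplex (m + 1) ↔
      c 0 + r ≤ 1 ∧ (∀ i : Fin m, c i.succ - c i.castSucc + r * √2 ≤ 0) ∧
        r ≤ c (Fin.last m) := by
  set e : Fin (m + 1) → EuclideanSpace ℝ (Fin (m + 1)) := fun i => EuclideanSpace.single i 1
  have he (i : Fin (m + 1)) (x : EuclideanSpace ℝ (Fin (m + 1))) : ⟪e i, x⟫ = x i := by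
    simp [e, EuclideanSpace.inner_single_left]
  have hK : kuhnSimplex (m + 1) = {x | ⟪e 0, x⟫ ≤ 1} ∩
      ((⋂ i : Fin m, {x | ⟪e i.succ - e i.castSucc, x⟫ ≤ 0}) ∩ {x | ⟪-e (Fin.last m), x⟫ ≤ 0}) := by
    ext x
    simp [mem_kuhnSimplex_succ_iff, he, inner_sub_left]
  have hnorm (i : Fin m) : ‖e i.succ - e i.castSucc‖ = √2 :=
    EuclideanSpace.norm_single_sub_single (Fin.castSucc_lt_succ (i := i)).ne'
  rw [hK, subset_inter_iff, subset_inter_iff, subset_iInter_iff,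
    closedBall_subset_setOf_inner_le_iff hr, closedBall_subset_setOf_inner_le_iff hr]
  simp_rw [closedBall_subset_setOf_inner_le_iff hr, hnorm, inner_sub_left, inner_neg_left, he,
    norm_neg, e, PiLp.norm_single, norm_one, mul_one, neg_add_nonpos_iff]

theorem sSup_inscribedRadii_kuhnSimplex_succ (m : ℕ) :
    sSup {r : ℝ | 0 ≤ r ∧ ∃ c, closedBall c r ⊆ kuhnSimplex (m + 1)} = 1 / (2 + m * √2) := by
  have hden : 0 < 2 + m * √2 := by positivity
  set ρ := 1 / (2 + m * √2)
  have hρ : ρ * (2 + m * √2) = 1 := one_div_mul_cancel hden.ne'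
  refine IsGreatest.csSup_eq
    ⟨⟨by positivity, WithLp.toLp 2 fun i => ρ * (1 + (m - i) * √2), ?_⟩, ?_⟩
  · rw [closedBall_subset_kuhnSimplex_succ_iff (by positivity)]
    refine ⟨?_, fun i => ?_, ?_⟩
    · simp only [Fin.val_zero, CharP.cast_eq_zero, sub_zero]
      linarith
    · simp only [Fin.val_succ, Fin.val_castSucc]
      push_cast
      linarith
    · simp
  · rintro r ⟨hr, c, hc⟩
    obtain ⟨h0, hsucc, hlast⟩ := (closedBall_subset_kuhnSimplex_succ_iff hr).1 hc
    have hdescent : ∀ i : Fin (m + 1), c i + r + i * (r * √2) ≤ 1 := by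
      refine Fin.induction (by simpa using h0) fun i ih => ?_
      simp only [Fin.val_succ, Fin.val_castSucc] at ih ⊢
      push_cast
      linarith [hsucc i]
    have := hdescent (Fin.last m)
    rw [Fin.val_last] at this
    rw [le_div_iff₀ hden]
    linarith

theorem sInf_circumscribedRadii_kuhnSimplex (n : ℕ) :
    sInf {r : ℝ | 0 ≤ r ∧ ∃ c, kuhnSimplex n ⊆ closedBall c r} = √n / 2 := by
  refine IsLeast.csInf_eq ⟨⟨by positivity, WithLp.toLp 2 fun _ => 1 / 2,
    convexHull_min ?_ (convex_closedBall _ _)⟩, ?_⟩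
  · rintro _ ⟨k, rfl⟩
    rw [mem_closedBall, EuclideanSpace.dist_eq_sqrt_card_mul (d := 1 / 2) (by norm_num),
      Fintype.card_fin, mul_one_div]
    intro i
    rw [kuhnVertex_apply, Real.dist_eq]
    split_ifs <;> norm_num
  · rintro r ⟨-, c, hc⟩
    have h0 := hc (subset_convexHull ℝ _ (mem_range_self 0))
    have hlast := hc (subset_convexHull ℝ _ (mem_range_self (Fin.last n)))
    have hdist : dist (kuhnVertex n 0) (kuhnVertex n (Fin.last n)) = √n := by
      rw [EuclideanSpace.dist_eq_sqrt_card_mul zero_le_one, Fintype.card_fin, mul_one]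
      intro i
      simp [kuhnVertex_apply]
    rw [mem_closedBall] at h0 hlast
    linarith [dist_triangle_right (kuhnVertex n 0) (kuhnVertex n (Fin.last n)) c]

/-- The shape regularity of the Kuhn simplex equals `γ(T̂) = √n (1 + (n−1)/√2)`. -/
theorem kuhn_shapeReg (n : ℕ) (hn : 1 ≤ n) :
    shapeReg (kuhnSimplex n) = Real.sqrt n * (1 + ((n : ℝ) - 1) / Real.sqrt 2) := by
  obtain ⟨m, rfl⟩ := Nat.exists_eq_add_of_le' hn
  rw [shapeReg, circumDiam, inDiam, sInf_circumscribedRadii_kuhnSimplex,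
    sSup_inscribedRadii_kuhnSimplex_succ]
  push_cast
  field_simp
  linear_combination (m : ℝ) * Real.sq_sqrt (zero_le_two : (0 : ℝ) ≤ 2)
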